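/- Let n ≥ 1, let Σ be a real symmetric positive definite n×n matrix, let Θ be a real antisymmetric n×n matrix, and let w ∈ ℝⁿ. Set ζ := (−Σ + iΘ) w ∈ ℂⁿ. Then π^{−n/2} √(det Σ) ∫_{ℝⁿ} e^{−uᵀΣu} sin(uᵀΘw) e^{−uᵀΣw} u du = Im( (1/2) e^{(1/4) ζᵀΣ⁻¹ζ} Σ⁻¹ ζ ), where the ℝⁿ-valued integral is taken entrywise and converges absolutely. Equivalently, the left-hand side equals (1/(2i)) ( φ'_Σ((−Σ + iΘ)w) − φ'_Σ(−(Σ + iΘ)w) ), where φ'_Σ(z) := (1/2) e^{(1/4) zᵀΣ⁻¹z} Σ⁻¹ z. -/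

import Mathlib

open MeasureTheory Matrix Real

noncomputable section

/-- Quadratic form `uᵀ A u`. -/
def qf {n : ℕ} (A : Matrix (Fin n) (Fin n) ℝ) (u : Fin n → ℝ) : ℝ := u ⬝ᵥ A.mulVec u

/-- Complex bilinear form `zᵀ A z` (no conjugation) for a real matrix `A`. -/
def qfC {n : ℕ} (A : Matrix (Fin n) (Fin n) ℝ) (z : Fin n → ℂ) : ℂ :=
  z ⬝ᵥ (A.map (fun a => (a : ℂ))).mulVec z

/-- The normalizing constant `π^{-n/2} √(det Σ)`. -/
def gaussConst {n : ℕ} (Sg : Matrix (Fin n) (Fin n) ℝ) : ℝ :=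
  (Real.sqrt (π ^ n))⁻¹ * Real.sqrt Sg.det

/-- `(−Σ + iΘ) w ∈ ℂⁿ`. -/
def zetaP {n : ℕ} (Sg Th : Matrix (Fin n) (Fin n) ℝ) (w : Fin n → ℝ) : Fin n → ℂ :=
  (Sg.map (fun a => (-a : ℂ)) + Complex.I • Th.map (fun a => (a : ℂ))).mulVec
    (fun k => (w k : ℂ))

/-- `−(Σ + iΘ) w ∈ ℂⁿ`. -/
def zetaM {n : ℕ} (Sg Th : Matrix (Fin n) (Fin n) ℝ) (w : Fin n → ℝ) : Fin n → ℂ :=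
  (Sg.map (fun a => (-a : ℂ)) - Complex.I • Th.map (fun a => (a : ℂ))).mulVec
    (fun k => (w k : ℂ))

/-- The gradient `φ'_Σ(z) = (1/2) e^{(1/4) zᵀΣ⁻¹z} Σ⁻¹ z` of the complex
moment-generating function of the Gaussian density `π^{-n/2}√(det Σ) e^{-uᵀΣu}`. -/
def mgfGrad {n : ℕ} (Sg : Matrix (Fin n) (Fin n) ℝ) (z : Fin n → ℂ) : Fin n → ℂ :=
  fun k => (1/2 : ℂ) * Complex.exp ((1/4 : ℂ) * qfC Sg⁻¹ z) *
    (Sg⁻¹.map (fun a => (a : ℂ))).mulVec z k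

/-!
Write `F_z(u) = e^{-uᵀΣu + uᵀz}` for `z ∈ ℂⁿ`. Factoring `Σ = AᵀA` and substituting `v = Au`
turns `∫ F_z` into a product of one-dimensional complex Gaussian integrals, which gives
`gaussConst Σ · ∫ F_z = φ_Σ(z)`. The derivative of `F_z` along a direction `v` integrates to zero,
i.e. `∫ (vᵀΣu) F_z(u) du = (vᵀz)/2 · ∫ F_z`; taking for `v` the rows of `Σ⁻¹` identifies the
normalized first moments `gaussConst Σ · ∫ u F_z(u) du` with `φ'_Σ(z)`. For `ζ = (−Σ + iΘ)w` the
imaginary part of `F_ζ(u)` is the real integrand `e^{−uᵀΣu} sin(uᵀΘw) e^{−uᵀΣw}`, and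
`−(Σ + iΘ)w` is the complex conjugate of `ζ`, so `φ'_Σ(−(Σ + iΘ)w)` is the conjugate of `φ'_Σ(ζ)`.
-/

section ChangeOfVariables

variable {ι : Type*} [Fintype ι] [DecidableEq ι] {M : Matrix ι ι ℝ}

theorem measurableEmbedding_mulVec (hM : M.det ≠ 0) : MeasurableEmbedding (M *ᵥ ·) :=
  (Matrix.toLinearEquiv' M (M.invertibleOfIsUnitDet hM.isUnit)).toContinuousLinearEquiv
    |>.toHomeomorph.measurableEmbedding

theorem map_mulVec_volume (hM : M.det ≠ 0) :
    Measure.map (M *ᵥ ·) (volume : Measure (ι → ℝ)) = ENNReal.ofReal |M.det|⁻¹ • volume := by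
  rw [← abs_inv, ← Real.map_matrix_volume_pi_eq_smul_volume_pi hM]
  rfl

theorem integrable_comp_mulVec_iff {E : Type*} [NormedAddCommGroup E] (hM : M.det ≠ 0)
    {g : (ι → ℝ) → E} : Integrable (fun u => g (M *ᵥ u)) ↔ Integrable g := by
  rw [← Function.comp_def, ← (measurableEmbedding_mulVec hM).integrable_map_iff,
    map_mulVec_volume hM, integrable_smul_measure (by simpa using hM) ENNReal.ofReal_ne_top]

theorem integral_comp_mulVec {E : Type*} [NormedAddCommGroup E] [NormedSpace ℝ E]
    (hM : M.det ≠ 0) (g : (ι → ℝ) → E) : ∫ u, g (M *ᵥ u) = |M.det|⁻¹ • ∫ v, g v := by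
  rw [← (measurableEmbedding_mulVec hM).integral_map, map_mulVec_volume hM,
    integral_smul_measure, ENNReal.toReal_ofReal (by positivity)]

end ChangeOfVariables

section RealMatrices

variable {ι : Type*} [Fintype ι]

theorem ofReal_comp_mulVec (M : Matrix ι ι ℝ) (u : ι → ℝ) :
    (fun i => ((M *ᵥ u) i : ℂ)) = M.map (fun a => (a : ℂ)) *ᵥ (fun i => (u i : ℂ)) :=
  funext (RingHom.map_mulVec Complex.ofRealHom M u)

theorem map_ofReal_mul (M N : Matrix ι ι ℝ) :
    (M * N).map (fun a => (a : ℂ)) = M.map (fun a => (a : ℂ)) * N.map (fun a => (a : ℂ)) :=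
  Matrix.map_mul (f := Complex.ofRealHom)

open scoped MatrixOrder in
theorem Matrix.PosDef.exists_eq_transpose_mul [DecidableEq ι] {S : Matrix ι ι ℝ}
    (hS : S.PosDef) : ∃ A : Matrix ι ι ℝ, IsUnit A.det ∧ S = Aᵀ * A := by
  obtain ⟨A, rfl⟩ := CStarAlgebra.nonneg_iff_eq_star_mul_self.mp hS.posSemidef.nonneg
  refine ⟨A, ?_, rfl⟩
  have := hS.det_pos
  rw [star_eq_conjTranspose, det_mul, det_conjTranspose] at this
  exact isUnit_iff_ne_zero.2 fun h => by simp [h] at this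

end RealMatrices

theorem ofReal_pi_cpow_natCast_div_two (n : ℕ) : (π : ℂ) ^ ((n : ℂ) / 2) = (√(π ^ n) : ℂ) := by
  rw [Real.sqrt_eq_rpow, ← Real.rpow_natCast, ← Real.rpow_mul pi_pos.le,
    Complex.ofReal_cpow pi_pos.le]
  push_cast
  ring_nf

def gaussExp {n : ℕ} (S : Matrix (Fin n) (Fin n) ℝ) (z : Fin n → ℂ) (u : Fin n → ℝ) : ℂ :=
  Complex.exp (-(qf S u : ℂ) + (fun i => (u i : ℂ)) ⬝ᵥ z)

section GaussianMoments

variable {n : ℕ} {S : Matrix (Fin n) (Fin n) ℝ}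

@[fun_prop]
theorem continuous_gaussExp (S : Matrix (Fin n) (Fin n) ℝ) (z : Fin n → ℂ) :
    Continuous (gaussExp S z) := by
  unfold gaussExp qf
  fun_prop

theorem gaussExp_add (S : Matrix (Fin n) (Fin n) ℝ) (z z' : Fin n → ℂ) (u : Fin n → ℝ) :
    gaussExp S (z + z') u = gaussExp S z u * Complex.exp ((fun i => (u i : ℂ)) ⬝ᵥ z') := by
  rw [gaussExp, gaussExp, dotProduct_add, ← add_assoc, Complex.exp_add]

theorem gaussExp_transpose_mul {A : Matrix (Fin n) (Fin n) ℝ} (hA : IsUnit A.det)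
    (z : Fin n → ℂ) (u : Fin n → ℝ) :
    gaussExp (Aᵀ * A) z u = Complex.exp (-1 * ∑ i, ((A *ᵥ u) i : ℂ) ^ 2 +
      ∑ i, (A⁻¹ᵀ.map (fun a => (a : ℂ)) *ᵥ z) i * (A *ᵥ u) i) := by
  have hquad : qf (Aᵀ * A) u = ∑ i, (A *ᵥ u) i ^ 2 := by
    rw [qf, ← mulVec_mulVec, dotProduct_transpose_mulVec]
    simp only [dotProduct, sq]
  have hlin : ∑ i, (A⁻¹ᵀ.map (fun a => (a : ℂ)) *ᵥ z) i * (A *ᵥ u) i =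
      (fun i => (u i : ℂ)) ⬝ᵥ z := by
    rw [← dotProduct.eq_def, ofReal_comp_mulVec, transpose_map, dotProduct_comm,
      dotProduct_transpose_mulVec, mulVec_mulVec, ← map_ofReal_mul, nonsing_inv_mul _ hA]
    simp [dotProduct_comm]
  rw [gaussExp, hquad, hlin]
  push_cast
  ring_nf

theorem sum_sq_transpose_inv_mulVec (A : Matrix (Fin n) (Fin n) ℝ) (z : Fin n → ℂ) :
    ∑ i, (A⁻¹ᵀ.map (fun a => (a : ℂ)) *ᵥ z) i ^ 2 = qfC (Aᵀ * A)⁻¹ z := by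
  rw [qfC, Matrix.mul_inv_rev, map_ofReal_mul, ← mulVec_mulVec, ← transpose_nonsing_inv,
    transpose_map, ← dotProduct_transpose_mulVec]
  simp only [dotProduct, sq]

theorem integrable_gaussExp (hS : S.PosDef) (z : Fin n → ℂ) : Integrable (gaussExp S z) := by
  obtain ⟨A, hA, rfl⟩ := hS.exists_eq_transpose_mul
  simp_rw [funext (gaussExp_transpose_mul hA z)]
  exact (integrable_comp_mulVec_iff hA.ne_zero).2
    (GaussianFourier.integrable_cexp_neg_mul_sum_add (by simp) _)

theorem gaussConst_mul_integral_gaussExp (hS : S.PosDef) (z : Fin n → ℂ) :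
    (gaussConst S : ℂ) * ∫ u, gaussExp S z u = Complex.exp ((1 / 4 : ℂ) * qfC S⁻¹ z) := by
  obtain ⟨A, hA, rfl⟩ := hS.exists_eq_transpose_mul
  simp_rw [funext (gaussExp_transpose_mul hA z)]
  rw [integral_comp_mulVec hA.ne_zero (fun v => Complex.exp (-1 * ∑ i, (v i : ℂ) ^ 2 +
      ∑ i, (A⁻¹ᵀ.map (fun a => (a : ℂ)) *ᵥ z) i * v i)),
    GaussianFourier.integral_cexp_neg_mul_sum_add (by simp), sum_sq_transpose_inv_mulVec,
    gaussConst, det_mul, det_transpose, ← sq, Real.sqrt_sq_eq_abs, Fintype.card_fin, div_one,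
    ofReal_pi_cpow_natCast_div_two]
  have hpi : √(π ^ n) ≠ 0 := by positivity
  have hdet : ((|A.det| : ℝ) : ℂ) ≠ 0 := by exact_mod_cast abs_ne_zero.2 hA.ne_zero
  rw [Complex.real_smul]
  push_cast
  field_simp

/-- `|aᵀu| |F_z(u)| ≤ |F_{z+a}(u)| + |F_{z-a}(u)|`, since `|x| ≤ eˣ + e⁻ˣ`. -/
theorem integrable_dotProduct_mul_gaussExp (hS : S.PosDef) (z : Fin n → ℂ) (a : Fin n → ℝ) :
    Integrable (fun u => ((a ⬝ᵥ u : ℝ) : ℂ) * gaussExp S z u) := by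
  set a' : Fin n → ℂ := fun i => (a i : ℂ)
  have hnorm (s : ℝ) (u : Fin n → ℝ) :
      ‖gaussExp S (z + s • a') u‖ = ‖gaussExp S z u‖ * Real.exp (s * (a ⬝ᵥ u)) := by
    rw [gaussExp_add, norm_mul, Complex.norm_exp]
    congr 2
    simp [a', dotProduct, Finset.mul_sum, mul_comm, mul_left_comm]
  have habs (x : ℝ) : |x| ≤ Real.exp x + Real.exp (-x) :=
    (show |x| ≤ Real.exp |x| by linarith [Real.add_one_le_exp |x|]).trans (Real.exp_abs_le x)
  refine ((integrable_gaussExp hS (z + (1 : ℝ) • a')).norm.add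
    (integrable_gaussExp hS (z + (-1 : ℝ) • a')).norm).mono'
    (Continuous.aestronglyMeasurable (by fun_prop)) (Filter.Eventually.of_forall fun u => ?_)
  rw [Pi.add_apply, hnorm, hnorm, norm_mul, Complex.norm_real, Real.norm_eq_abs, one_mul,
    neg_one_mul, ← mul_add, mul_comm]
  exact mul_le_mul_of_nonneg_left (habs _) (norm_nonneg _)

theorem integrable_gaussExp_mul_apply (hS : S.PosDef) (z : Fin n → ℂ) (k : Fin n) :
    Integrable (fun u => gaussExp S z u * u k) := by
  simpa [mul_comm] using integrable_dotProduct_mul_gaussExp hS z (Pi.single k 1)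

theorem qf_add_smul (hS : S.IsSymm) (u v : Fin n → ℝ) (t : ℝ) :
    qf S (u + t • v) = qf S u + t * (2 * (v ⬝ᵥ S *ᵥ u)) + t ^ 2 * qf S v := by
  have hsymm : u ⬝ᵥ S *ᵥ v = v ⬝ᵥ S *ᵥ u := by
    simpa [hS.eq] using dotProduct_transpose_mulVec S u v
  simp only [qf, mulVec_add, mulVec_smul, dotProduct_add, add_dotProduct, dotProduct_smul,
    smul_dotProduct, smul_eq_mul, hsymm]
  ring

theorem hasLineDerivAt_gaussExp (hS : S.IsSymm) (z : Fin n → ℂ) (u v : Fin n → ℝ) :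
    HasLineDerivAt ℝ (gaussExp S z)
      ((-2 * (v ⬝ᵥ S *ᵥ u : ℝ) + (fun i => (v i : ℂ)) ⬝ᵥ z) * gaussExp S z u) u v := by
  set b : ℂ := -2 * (v ⬝ᵥ S *ᵥ u : ℝ) + (fun i => (v i : ℂ)) ⬝ᵥ z with hb
  have hline : (fun t : ℝ => gaussExp S z (u + t • v)) =
      fun t : ℝ => gaussExp S z u * Complex.exp ((t : ℂ) * b - (t : ℂ) ^ 2 * qf S v) := by
    ext t
    have hlin : (fun i => ((u + t • v) i : ℂ)) ⬝ᵥ z =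
        (fun i => (u i : ℂ)) ⬝ᵥ z + t * ((fun i => (v i : ℂ)) ⬝ᵥ z) := by
      simp only [dotProduct, Finset.mul_sum, ← Finset.sum_add_distrib, Pi.add_apply,
        Pi.smul_apply, smul_eq_mul]
      push_cast
      exact Finset.sum_congr rfl fun i _ => by ring
    rw [gaussExp, gaussExp, ← Complex.exp_add, qf_add_smul hS, hlin, hb]
    push_cast
    ring_nf
  have hpoly : HasDerivAt (fun t : ℂ => t * b - t ^ 2 * qf S v) b ((0 : ℝ) : ℂ) := by
    simpa using ((hasDerivAt_id (0 : ℂ)).mul_const b).fun_sub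
      ((hasDerivAt_pow 2 (0 : ℂ)).mul_const (qf S v : ℂ))
  unfold HasLineDerivAt
  rw [hline]
  simpa [mul_comm] using hpoly.comp_ofReal.cexp.const_mul (gaussExp S z u)

theorem integral_dotProduct_mulVec_mul_gaussExp (hS : S.PosDef) (z : Fin n → ℂ)
    (v : Fin n → ℝ) :
    ∫ u, ((v ⬝ᵥ S *ᵥ u : ℝ) : ℂ) * gaussExp S z u =
      (fun i => (v i : ℂ)) ⬝ᵥ z / 2 * ∫ u, gaussExp S z u := by
  have hF := integrable_gaussExp hS z
  have hvF : Integrable (fun u => ((v ⬝ᵥ S *ᵥ u : ℝ) : ℂ) * gaussExp S z u) := by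
    simpa only [dotProduct_mulVec] using integrable_dotProduct_mul_gaussExp hS z (v ᵥ* S)
  have hderiv : Integrable (fun u =>
      (-2 * (v ⬝ᵥ S *ᵥ u : ℝ) + (fun i => (v i : ℂ)) ⬝ᵥ z) * gaussExp S z u) := by
    simpa only [add_mul, mul_assoc] using (hvF.const_mul (-2)).fun_add (hF.const_mul _)
  have hzero :
      ∫ u, (-2 * (v ⬝ᵥ S *ᵥ u : ℝ) + (fun i => (v i : ℂ)) ⬝ᵥ z) * gaussExp S z u = 0 := by
    simpa using integral_bilinear_hasLineDerivAt_right_eq_neg_left_of_integrable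
      (f := fun _ => (1 : ℂ)) (f' := fun _ => 0) (B := ContinuousLinearMap.mul ℝ ℂ)
      (by simp) (by simpa using hderiv) (by simpa using hF)
      (fun _ _ => hasDerivAt_const (0 : ℝ) (1 : ℂ))
      (fun u _ => hasLineDerivAt_gaussExp (isHermitian_iff_isSymm.1 hS.isHermitian) z u v)
  simp only [add_mul, mul_assoc] at hzero
  rw [integral_add (hvF.const_mul _) (hF.const_mul _), integral_const_mul, integral_const_mul]
    at hzero
  linear_combination -hzero / 2

theorem gaussConst_mul_integral_gaussExp_mul_apply (hS : S.PosDef) (z : Fin n → ℂ) (k : Fin n) :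
    (gaussConst S : ℂ) * ∫ u, gaussExp S z u * u k = mgfGrad S z k := by
  have hrow (u : Fin n → ℝ) : (fun j => S⁻¹ k j) ⬝ᵥ S *ᵥ u = u k := by
    change (S⁻¹ *ᵥ S *ᵥ u) k = u k
    rw [mulVec_mulVec, nonsing_inv_mul _ hS.det_pos.ne'.isUnit, one_mulVec]
  have hmoment := integral_dotProduct_mulVec_mul_gaussExp hS z (fun j => S⁻¹ k j)
  simp only [hrow] at hmoment
  simp_rw [mul_comm (gaussExp S z _)]
  rw [hmoment, mgfGrad, ← gaussConst_mul_integral_gaussExp hS z]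
  change _ = _ * _ * ((fun j => (S⁻¹ k j : ℂ)) ⬝ᵥ z)
  ring

theorem mgfGrad_star (S : Matrix (Fin n) (Fin n) ℝ) (z : Fin n → ℂ) (k : Fin n) :
    mgfGrad S (star z) k = starRingEnd ℂ (mgfGrad S z k) := by
  simp [mgfGrad, qfC, dotProduct, mulVec, ← Complex.exp_conj, map_ofNat]

end GaussianMoments

section Specialization

variable {n : ℕ} (S Θ : Matrix (Fin n) (Fin n) ℝ) (w : Fin n → ℝ)

theorem im_gaussExp_zetaP_mul (u : Fin n → ℝ) (k : Fin n) :
    (gaussExp S (zetaP S Θ w) u * u k).im = Real.exp (-(qf S u)) * Real.sin (u ⬝ᵥ Θ.mulVec w) *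
      Real.exp (-(u ⬝ᵥ S.mulVec w)) * u k := by
  rw [Complex.im_mul_ofReal, gaussExp, Complex.exp_im]
  congr 1
  simp [zetaP, dotProduct, mulVec, Complex.re_sum, Complex.im_sum, Real.exp_add]
  ring

theorem zetaM_eq_star_zetaP : zetaM S Θ w = star (zetaP S Θ w) := by
  ext i
  simp [zetaM, zetaP, mulVec, dotProduct, sub_eq_add_neg]

end Specialization

theorem stmt11_general {n : ℕ} (Sg : Matrix (Fin n) (Fin n) ℝ)
    (hpos : Sg.PosDef)
    (Th : Matrix (Fin n) (Fin n) ℝ) (w : Fin n → ℝ) :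
    (∀ k : Fin n,
      Integrable (fun u : Fin n → ℝ =>
        Real.exp (-(qf Sg u)) * Real.sin (u ⬝ᵥ Th.mulVec w) *
          Real.exp (-(u ⬝ᵥ Sg.mulVec w)) * u k)) ∧
    (∀ k : Fin n,
      gaussConst Sg *
          ∫ u : Fin n → ℝ,
            Real.exp (-(qf Sg u)) * Real.sin (u ⬝ᵥ Th.mulVec w) *
              Real.exp (-(u ⬝ᵥ Sg.mulVec w)) * u k =
        (mgfGrad Sg (zetaP Sg Th w) k).im) ∧
    ∀ k : Fin n,
      ((gaussConst Sg *
          ∫ u : Fin n → ℝ,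
            Real.exp (-(qf Sg u)) * Real.sin (u ⬝ᵥ Th.mulVec w) *
              Real.exp (-(u ⬝ᵥ Sg.mulVec w)) * u k : ℝ) : ℂ) =
        (1 / (2 * Complex.I)) * (mgfGrad Sg (zetaP Sg Th w) k - mgfGrad Sg (zetaM Sg Th w) k) := by
  have hint := integrable_gaussExp_mul_apply hpos (zetaP Sg Th w)
  have hreal (k : Fin n) : (fun u : Fin n → ℝ => Real.exp (-(qf Sg u)) *
      Real.sin (u ⬝ᵥ Th.mulVec w) * Real.exp (-(u ⬝ᵥ Sg.mulVec w)) * u k) =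
      fun u => (gaussExp Sg (zetaP Sg Th w) u * u k).im :=
    funext fun u => (im_gaussExp_zetaP_mul Sg Th w u k).symm
  have hval (k : Fin n) : gaussConst Sg * ∫ u : Fin n → ℝ, Real.exp (-(qf Sg u)) *
      Real.sin (u ⬝ᵥ Th.mulVec w) * Real.exp (-(u ⬝ᵥ Sg.mulVec w)) * u k =
      (mgfGrad Sg (zetaP Sg Th w) k).im := by
    have him : ∫ u, (gaussExp Sg (zetaP Sg Th w) u * u k).im =
        (∫ u, gaussExp Sg (zetaP Sg Th w) u * u k).im := integral_im (hint k)
    rw [hreal, him, ← Complex.im_ofReal_mul, gaussConst_mul_integral_gaussExp_mul_apply hpos]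
  refine ⟨fun k => hreal k ▸ (hint k).im, hval, fun k => ?_⟩
  rw [hval, zetaM_eq_star_zetaP, mgfGrad_star, Complex.im_eq_sub_conj]
  ring

/-- with `ζ := (−Σ + iΘ)w`,
`π^{−n/2}√(det Σ) ∫ e^{−uᵀΣu} sin(uᵀΘw) e^{−uᵀΣw} u du = Im((1/2) e^{(1/4)ζᵀΣ⁻¹ζ} Σ⁻¹ζ)`,
entrywise, with absolute convergence; equivalently the left-hand side equals
`(1/(2i))(φ'_Σ((−Σ+iΘ)w) − φ'_Σ(−(Σ+iΘ)w))`. -/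
theorem stmt11 {n : ℕ} (hn : 1 ≤ n) (Sg : Matrix (Fin n) (Fin n) ℝ)
    (hsymm : Sg.IsSymm) (hpos : Sg.PosDef)
    (Th : Matrix (Fin n) (Fin n) ℝ) (hanti : Thᵀ = -Th) (w : Fin n → ℝ) :
    (∀ k : Fin n,
      Integrable (fun u : Fin n → ℝ =>
        Real.exp (-(qf Sg u)) * Real.sin (u ⬝ᵥ Th.mulVec w) *
          Real.exp (-(u ⬝ᵥ Sg.mulVec w)) * u k)) ∧
    (∀ k : Fin n,
      gaussConst Sg *
          ∫ u : Fin n → ℝ,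
            Real.exp (-(qf Sg u)) * Real.sin (u ⬝ᵥ Th.mulVec w) *
              Real.exp (-(u ⬝ᵥ Sg.mulVec w)) * u k =
        (mgfGrad Sg (zetaP Sg Th w) k).im) ∧
    ∀ k : Fin n,
      ((gaussConst Sg *
          ∫ u : Fin n → ℝ,
            Real.exp (-(qf Sg u)) * Real.sin (u ⬝ᵥ Th.mulVec w) *
              Real.exp (-(u ⬝ᵥ Sg.mulVec w)) * u k : ℝ) : ℂ) =
        (1 / (2 * Complex.I)) * (mgfGrad Sg (zetaP Sg Th w) k - mgfGrad Sg (zetaM Sg Th w) k) :=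
  stmt11_general Sg hpos Th w
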